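/- arXiv:2211.03095 — 5 statements merged into one kernel-verified Lean document; each statement's English description precedes it below -/
import Mathlib

section
/- Every k-connected graph G on n vertices has a cycle of length at least min{n, 2k}. -/
/-! Take a longest cycle `C` and suppose it is shorter than `min n (2k)`. Some vertex `u` lies off
`C`; let `S` be the vertices of `C` adjacent to the part of `G - C` reachable from `u`. Either `S`
is all of `C`, or it separates `u` from the rest of `C` and so has at least `k` vertices; in both
cases `2 |S| > |C|`, so two vertices of `S` are consecutive on `C`. Replacing the edge between them
by a detour through `G - C` gives a longer cycle. Some cycle exists because every degree is at
least `k ≥ 2`, while a finite tree has a leaf. -/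

open SimpleGraph

/-- A set of vertices is cyclable if some cycle of `G` passes through all of them. -/
def Cyclable {V : Type*} (G : SimpleGraph V) (S : Finset V) : Prop :=
  ∃ (v : V) (w : G.Walk v v), w.IsCycle ∧ ∀ x ∈ S, x ∈ w.support

/-- `G` is `k`-cyclable if every set of `k` vertices is cyclable. -/
def KCyclable {V : Type*} (G : SimpleGraph V) (k : ℕ) : Prop :=
  ∀ S : Finset V, S.card = k → Cyclable G S
/-- `G` is `k`-connected: more than `k` vertices, and removing any `k-1` vertices
leaves the graph connected. -/
def KConnected {V : Type*} [Fintype V] (G : SimpleGraph V) (k : ℕ) : Prop :=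
  k < Fintype.card V ∧
    ∀ T : Finset V, T.card ≤ k - 1 → ((⊤ : G.Subgraph).deleteVerts ↑T).coe.Connected

namespace SimpleGraph

variable {V : Type*} {G : SimpleGraph V}

namespace Walk

lemma IsPath.fst_ne_of_mem_darts {u v : V} {p : G.Walk u v} (hp : p.IsPath) {d : G.Dart}
    (hd : d ∈ p.darts) : d.fst ≠ v := by
  have hnodup := hp.support_nodup
  rw [← p.map_fst_darts_append, List.nodup_append] at hnodup
  exact hnodup.2.2 _ (List.mem_map_of_mem hd) _ (List.mem_singleton_self v)

lemma exists_mem_darts_snd_eq {v x : V} {p : G.Walk v v} (hp : ¬ p.Nil) (hx : x ∈ p.support) :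
    ∃ d ∈ p.darts, d.snd = x := by
  rw [← List.mem_map, map_snd_darts]
  rw [← p.cons_tail_support, List.mem_cons] at hx
  rcases hx with rfl | hx
  · exact p.end_mem_tail_support hp
  · exact hx

lemma exists_mem_darts_fst_eq {v x : V} {p : G.Walk v v} (hp : ¬ p.Nil) (hx : x ∈ p.support) :
    ∃ d ∈ p.darts, d.fst = x := by
  obtain ⟨d, hd, rfl⟩ := p.reverse.exists_mem_darts_snd_eq (by simpa using hp) (by simpa using hx)
  exact ⟨d.symm, mem_darts_reverse.mp hd, rfl⟩

/-- At least `#S` darts of `p` leave `S` and at least `#S` enter it, out of `p.length`. -/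
lemma exists_mem_darts_fst_mem_snd_mem {v : V} {p : G.Walk v v} (hp : ¬ p.Nil)
    {S : Finset V} (hS : ∀ x ∈ S, x ∈ p.support) (hlen : p.length < 2 * S.card) :
    ∃ d ∈ p.darts, d.fst ∈ S ∧ d.snd ∈ S := by
  classical
  set D := p.darts.toFinset
  have hout : S.card ≤ (D.filter (·.fst ∈ S)).card := by
    refine Finset.card_le_card_of_surjOn (·.fst) fun x hx ↦ ?_
    obtain ⟨d, hd, rfl⟩ := exists_mem_darts_fst_eq hp (hS x hx)
    exact ⟨d, by simpa [D, hd] using hx, rfl⟩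
  have hin : S.card ≤ (D.filter (·.snd ∈ S)).card := by
    refine Finset.card_le_card_of_surjOn (·.snd) fun x hx ↦ ?_
    obtain ⟨d, hd, rfl⟩ := exists_mem_darts_snd_eq hp (hS x hx)
    exact ⟨d, by simpa [D, hd] using hx, rfl⟩
  have hD : D.card ≤ p.length := p.length_darts ▸ List.toFinset_card_le _
  obtain ⟨d, hd⟩ := Finset.inter_nonempty_of_card_lt_card_add_card
    (Finset.filter_subset (·.fst ∈ S) D) (Finset.filter_subset (·.snd ∈ S) D) (by omega)
  simp only [Finset.mem_inter, Finset.mem_filter, D, List.mem_toFinset] at hd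
  exact ⟨d, hd.1.1, hd.1.2, hd.2.2⟩

lemma IsCycle.card_support_toFinset [DecidableEq V] {v : V} {C : G.Walk v v} (hC : C.IsCycle) :
    C.support.toFinset.card = C.length := by
  rw [← C.cons_tail_support, List.toFinset_cons,
    Finset.insert_eq_of_mem (List.mem_toFinset.mpr (C.end_mem_tail_support hC.not_nil)),
    List.toFinset_card_of_nodup hC.support_nodup, List.length_tail, length_support]
  rfl

lemma IsCycle.exists_isPath_of_mem_darts {v : V} {C : G.Walk v v} (hC : C.IsCycle)
    {d : G.Dart} (hd : d ∈ C.darts) :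
    ∃ q : G.Walk d.snd d.fst, q.IsPath ∧ q.length + 1 = C.length ∧ q.support ⊆ C.support := by
  classical
  obtain ⟨⟨x, y⟩, hxy⟩ := d
  have hx := C.dart_fst_mem_support_of_mem_darts hd
  have hrot := hC.rotate hx
  have hd' := ((C.rotate_darts x hx).perm.mem_iff).mpr hd
  have hlen := C.length_rotate x hx
  have hsupp : ∀ z, z ∈ (C.rotate x hx).support → z ∈ C.support :=
    fun z ↦ (C.mem_support_rotate_iff x hx).mp
  obtain ⟨y', h, q, hq⟩ := not_nil_iff.mp hrot.not_nil
  rw [hq] at hd' hrot hlen hsupp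
  have hqpath := ((cons_isCycle_iff q h).mp hrot).1
  rcases List.mem_cons.mp hd' with heq | hmem
  · obtain rfl : y = y' := congrArg (·.toProd.2) heq
    exact ⟨q, hqpath, hlen, fun z hz ↦ hsupp z (List.mem_cons_of_mem _ hz)⟩
  · exact absurd rfl (hqpath.fst_ne_of_mem_darts hmem)

lemma isCycle_cons_append_cons {x y x' y' : V} {q : G.Walk y x} (hq : q.IsPath)
    {r : G.Walk x' y'} (hr : r.IsPath) (hdisj : r.support.Disjoint q.support) (hxy : x ≠ y)
    (hx : G.Adj x x') (hy : G.Adj y' y) : (cons hx (r.append (cons hy q))).IsCycle := by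
  rw [cons_isCycle_iff]
  constructor
  · rw [isPath_def, support_append, support_cons, List.tail_cons]
    exact hr.support_nodup.append hq.support_nodup hdisj
  · intro he
    simp only [edges_append, edges_cons, List.mem_append, List.mem_cons] at he
    rcases he with he | he | he
    · exact hdisj (r.fst_mem_support_of_mem_edges he) q.end_mem_support
    · rcases Sym2.eq_iff.mp he with ⟨rfl, -⟩ | ⟨rfl, -⟩
      · exact hdisj r.end_mem_support q.end_mem_support
      · exact hxy rfl
    · exact hdisj r.start_mem_support (q.snd_mem_support_of_mem_edges he)

end Walk

open Walk

lemma exists_isCycle_forall_length_le [Finite G.edgeSet]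
    (h : ∃ (v : V) (C : G.Walk v v), C.IsCycle) :
    ∃ (v : V) (C : G.Walk v v), C.IsCycle ∧
      ∀ (u : V) (C' : G.Walk u u), C'.IsCycle → C'.length ≤ C.length := by
  have := Fintype.ofFinite G.edgeSet
  let s := {n | ∃ (v : V) (C : G.Walk v v), C.IsCycle ∧ C.length = n}
  have hs : s.Finite := (Set.finite_le_nat G.edgeFinset.card).subset
    fun n ⟨_, _, hC, hn⟩ ↦ hn ▸ hC.isTrail.length_le_card_edgeFinset
  obtain ⟨v, C, hC⟩ := h
  obtain ⟨_, ⟨u, C, hC, rfl⟩, hmax⟩ := Set.exists_max_image s id hs ⟨_, v, C, hC, rfl⟩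
  exact ⟨u, C, hC, fun u' C' hC' ↦ hmax _ ⟨u', C', hC', rfl⟩⟩

def reachSetAvoiding (G : SimpleGraph V) (W : Set V) (u : V) : Set V :=
  {x | ∃ p : G.Walk u x, ∀ y ∈ p.support, y ∉ W}

section reachSetAvoiding

variable {W : Set V} {u x y : V}

lemma mem_reachSetAvoiding_self (hu : u ∉ W) : u ∈ G.reachSetAvoiding W u :=
  ⟨nil, by simpa using hu⟩

lemma notMem_of_mem_reachSetAvoiding (hx : x ∈ G.reachSetAvoiding W u) : x ∉ W := by
  obtain ⟨p, hp⟩ := hx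
  exact hp x p.end_mem_support

lemma mem_reachSetAvoiding_of_adj (hx : x ∈ G.reachSetAvoiding W u) (hxy : G.Adj x y)
    (hy : y ∉ W) : y ∈ G.reachSetAvoiding W u := by
  obtain ⟨p, hp⟩ := hx
  refine ⟨p.concat hxy, fun z hz ↦ ?_⟩
  rw [support_concat, List.mem_append, List.mem_singleton] at hz
  rcases hz with hz | rfl
  · exact hp z hz
  · exact hy

lemma exists_isPath_of_mem_reachSetAvoiding (hx : x ∈ G.reachSetAvoiding W u)
    (hy : y ∈ G.reachSetAvoiding W u) : ∃ r : G.Walk x y, r.IsPath ∧ ∀ z ∈ r.support, z ∉ W := by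
  classical
  obtain ⟨p, hp⟩ := hx
  obtain ⟨q, hq⟩ := hy
  refine ⟨(p.reverse.append q).bypass, bypass_isPath _, fun z hz ↦ ?_⟩
  rcases (mem_support_append_iff _ _).mp (support_bypass_subset_support _ hz) with hz | hz
  · exact hp z (by simpa using hz)
  · exact hq z hz

lemma exists_mem_support_adj_of_mem (hu : u ∉ W) {z : V} (p : G.Walk u z) (hz : z ∈ W) :
    ∃ y ∈ p.support, y ∈ W ∧ ∃ x ∈ G.reachSetAvoiding W u, G.Adj y x := by
  obtain ⟨d, hd, hfst, hsnd⟩ := p.exists_boundary_dart _ (mem_reachSetAvoiding_self hu)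
    (fun h ↦ notMem_of_mem_reachSetAvoiding h hz)
  have hW : d.snd ∈ W := by
    by_contra hW
    exact hsnd (mem_reachSetAvoiding_of_adj hfst d.adj hW)
  exact ⟨d.snd, p.dart_snd_mem_support_of_mem_darts hd, hW, d.fst, hfst, d.adj.symm⟩

end reachSetAvoiding

lemma exists_walk_of_connected_deleteVerts {T : Set V}
    (hconn : ((⊤ : G.Subgraph).deleteVerts T).coe.Connected) {a b : V} (ha : a ∉ T)
    (hb : b ∉ T) : ∃ p : G.Walk a b, ∀ x ∈ p.support, x ∉ T := by
  obtain ⟨p⟩ := hconn ⟨a, by simpa using ha⟩ ⟨b, by simpa using hb⟩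
  refine ⟨p.map (Subgraph.hom _), fun x hx ↦ ?_⟩
  replace hx : x ∈ (p.map (Subgraph.hom _)).support := hx
  rw [Walk.support_map, List.mem_map] at hx
  obtain ⟨⟨x, hx'⟩, -, rfl⟩ := hx
  simp only [Subgraph.deleteVerts_verts, Subgraph.verts_top, Set.mem_sdiff] at hx'
  exact hx'.2

namespace KConnected

variable [Fintype V] {k : ℕ} (hG : KConnected G k)
include hG

lemma le_card_of_forall_walk {T : Finset V} {a b : V} (ha : a ∉ T) (hb : b ∉ T)
    (hsep : ∀ p : G.Walk a b, ∃ z ∈ p.support, z ∈ T) : k ≤ T.card := by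
  by_contra! hlt
  obtain ⟨p, hp⟩ := exists_walk_of_connected_deleteVerts (hG.2 T (by omega))
    (Finset.mem_coe.not.mpr ha) (Finset.mem_coe.not.mpr hb)
  obtain ⟨z, hz, hzT⟩ := hsep p
  exact hp z hz hzT

lemma connected : G.Connected := by
  have : Nonempty V := Fintype.card_pos_iff.mp (Nat.zero_lt_of_lt hG.1)
  refine ⟨fun a b ↦ ?_⟩
  obtain ⟨p, -⟩ := exists_walk_of_connected_deleteVerts (hG.2 ∅ (by simp)) (by simp) (by simp)
  exact ⟨p⟩

/-- The neighbourhood of `v` separates `v` from the remaining vertices, of which there are some. -/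
lemma le_degree [DecidableRel G.Adj] (v : V) : k ≤ G.degree v := by
  classical
  rw [← card_neighborFinset_eq_degree]
  by_contra! hlt
  obtain ⟨b, -, hb⟩ := Finset.exists_mem_notMem_of_card_lt_card
    (s := insert v (G.neighborFinset v)) (t := Finset.univ) (by
      have := Finset.card_insert_le v (G.neighborFinset v)
      have := hG.1
      rw [Finset.card_univ]; omega)
  rw [Finset.mem_insert, not_or] at hb
  refine (hG.le_card_of_forall_walk (G.notMem_neighborFinset_self v) hb.2
    fun p ↦ ⟨p.snd, p.getVert_mem_support 1, ?_⟩).not_gt hlt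
  exact (mem_neighborFinset _ _ _).mpr (p.adj_snd (not_nil_of_ne (Ne.symm hb.1)))

lemma exists_isCycle (hk : 2 ≤ k) : ∃ (v : V) (C : G.Walk v v), C.IsCycle := by
  classical
  by_contra! hacyclic
  have : Nontrivial V := Fintype.one_lt_card_iff_nontrivial.mp (by have := hG.1; omega)
  obtain ⟨v, hv⟩ := IsTree.exists_vert_degree_one_of_nontrivial ⟨hG.connected, hacyclic⟩
  have := hG.le_degree v
  omega

lemma exists_isCycle_length_gt {v : V} {C : G.Walk v v} (hC : C.IsCycle)
    (hlt : C.length < min (Fintype.card V) (2 * k)) :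
    ∃ (u : V) (C' : G.Walk u u), C'.IsCycle ∧ C.length < C'.length := by
  classical
  have hCn := lt_of_lt_of_le hlt (min_le_left _ _)
  have hCk := lt_of_lt_of_le hlt (min_le_right _ _)
  obtain ⟨u, -, hu⟩ := Finset.exists_mem_notMem_of_card_lt_card (s := C.support.toFinset)
    (t := Finset.univ) (by rwa [hC.card_support_toFinset, Finset.card_univ])
  rw [List.mem_toFinset] at hu
  let H := G.reachSetAvoiding {x | x ∈ C.support} u
  let S := C.support.toFinset.filter fun y ↦ ∃ x ∈ H, G.Adj y x
  have hSC : ∀ y ∈ S, y ∈ C.support :=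
    fun y hy ↦ List.mem_toFinset.mp (Finset.mem_filter.mp hy).1
  have hS : C.length < 2 * S.card := by
    by_cases hall : C.support.toFinset ⊆ S
    · have : C.length ≤ S.card := hC.card_support_toFinset ▸ Finset.card_le_card hall
      have := hC.three_le_length
      omega
    · obtain ⟨z, hzC, hzS⟩ := Finset.not_subset.mp hall
      have : k ≤ S.card := hG.le_card_of_forall_walk (fun h ↦ hu (hSC u h)) hzS fun p ↦ by
        obtain ⟨y, hy, hyC, x, hx, hyx⟩ := exists_mem_support_adj_of_mem
          (W := {x | x ∈ C.support}) hu p (List.mem_toFinset.mp hzC)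
        exact ⟨y, hy, Finset.mem_filter.mpr ⟨List.mem_toFinset.mpr hyC, x, hx, hyx⟩⟩
      omega
  obtain ⟨d, hd, hx, hy⟩ := exists_mem_darts_fst_mem_snd_mem hC.not_nil hSC hS
  obtain ⟨q, hq, hqlen, hqC⟩ := hC.exists_isPath_of_mem_darts hd
  obtain ⟨x', hx', hxx'⟩ := (Finset.mem_filter.mp hx).2
  obtain ⟨y', hy', hyy'⟩ := (Finset.mem_filter.mp hy).2
  obtain ⟨r, hr, hrC⟩ := exists_isPath_of_mem_reachSetAvoiding hx' hy'
  refine ⟨_, _, isCycle_cons_append_cons hq hr (fun z hzr hzq ↦ hrC z hzr (hqC hzq))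
    (G.ne_of_adj d.adj) hxx' hyy'.symm, ?_⟩
  simp only [length_cons, length_append]
  omega

end KConnected

end SimpleGraph

theorem kConnected_circumference {V : Type*} [Fintype V] (G : SimpleGraph V) (k : ℕ)
    (hk : 2 ≤ k) (hG : KConnected G k) :
    ∃ (v : V) (w : G.Walk v v), w.IsCycle ∧ min (Fintype.card V) (2 * k) ≤ w.length := by
  obtain ⟨v, C, hC, hmax⟩ := exists_isCycle_forall_length_le (hG.exists_isCycle hk)
  refine ⟨v, C, hC, not_lt.mp fun hlt ↦ ?_⟩
  obtain ⟨u, C', hC', hlonger⟩ := hG.exists_isCycle_length_gt hC hlt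
  exact (hmax u C' hC').not_gt hlonger
end

section
/- If G is a k-connected graph of order n ≥ 2(k²+k) with more than C(n−k,2) + k² edges, then G is hamiltonian. -/
open Finset

namespace SimpleGraph

variable {V : Type*} {G H : SimpleGraph V} {u v w : V}

namespace Walk

lemma IsCycle.eq_snd_or_eq_penultimate_of_mem_edges {c : G.Walk u u} (hc : c.IsCycle)
    (h : s(u, w) ∈ c.edges) : w = c.snd ∨ w = c.penultimate := by
  rw [← c.cons_tail_eq hc.not_nil, edges_cons, List.mem_cons] at h
  rcases h with h | h
  · exact .inl (Sym2.congr_right.mp h)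
  · right
    rw [hc.isPath_tail.eq_penultimate_of_mem_edges h, penultimate, penultimate,
      getVert_tail, length_tail]
    have := hc.three_le_length
    congr 1
    omega

variable [DecidableEq V]

lemma IsHamiltonian.exists_predecessors {p : G.Walk u v} (hp : p.IsHamiltonian)
    (X : Finset V) (hu : u ∉ X) :
    ∃ S : Finset V, #S = #X ∧
      ∀ w ∈ S, ∃ i < p.length, p.getVert i = w ∧ p.getVert (i + 1) ∈ X := by
  let I := {i ∈ range p.length | p.getVert (i + 1) ∈ X}
  have hI : ∀ i ∈ I, i < p.length := fun i hi => mem_range.mp (mem_filter.mp hi).1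
  have hinj : Set.InjOn p.getVert {i | i ≤ p.length} := hp.isPath.getVert_injOn
  have hX : X = I.image (fun i => p.getVert (i + 1)) := by
    ext x
    simp only [mem_image, mem_filter, mem_range, I]
    refine ⟨fun hx => ?_, by rintro ⟨i, ⟨-, hi⟩, rfl⟩; exact hi⟩
    obtain ⟨j, rfl, hj⟩ := mem_support_iff_exists_getVert.mp (hp.mem_support x)
    obtain ⟨i, rfl⟩ := Nat.exists_eq_succ_of_ne_zero (show j ≠ 0 by rintro rfl; simp_all)
    exact ⟨i, ⟨hj, hx⟩, rfl⟩
  refine ⟨I.image p.getVert, ?_, ?_⟩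
  · rw [hX, card_image_of_injOn, card_image_of_injOn]
    · exact fun i hi j hj hij => by simpa using hinj (hI i hi) (hI j hj) hij
    · exact fun i hi j hj hij => hinj (hI i hi).le (hI j hj).le hij
  · simp only [mem_image, mem_filter, mem_range, I]
    rintro _ ⟨i, ⟨hi, hX⟩, rfl⟩
    exact ⟨i, hi, rfl, hX⟩

variable [Fintype V]

lemma IsHamiltonian.isHamiltonianCycle_cons {p : G.Walk v u} (hp : p.IsHamiltonian)
    (h : G.Adj u v) (hV : 3 ≤ Fintype.card V) : (cons h p).IsHamiltonianCycle := by
  rw [isHamiltonianCycle_iff_isCycle_and_length_eq, isCycle_iff_isPath_tail_and_le_length]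
  simp [hp.isPath, hp.length_eq]
  omega

lemma IsHamiltonianCycle.transfer {c : G.Walk u u} (hc : c.IsHamiltonianCycle)
    (hH : ∀ e ∈ c.edges, e ∈ H.edgeSet) : (c.transfer H hH).IsHamiltonianCycle :=
  isHamiltonianCycle_iff_isCycle_and_length_eq.mpr
    ⟨hc.isCycle.transfer hH, by simpa using hc.length_eq⟩

lemma IsHamiltonianCycle.reverse {c : G.Walk u u} (hc : c.IsHamiltonianCycle) :
    c.reverse.IsHamiltonianCycle :=
  isHamiltonianCycle_iff_isCycle_and_length_eq.mpr
    ⟨hc.isCycle.reverse, by simpa using hc.length_eq⟩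

lemma IsHamiltonian.isHamiltonian_of_adj_getVert {p : G.Walk u v} (hp : p.IsHamiltonian)
    (hV : 3 ≤ Fintype.card V) {i : ℕ} (hi : i < p.length) (hu : G.Adj u (p.getVert (i + 1)))
    (hv : G.Adj v (p.getVert i)) : G.IsHamiltonian := by
  let q := (p.drop (i + 1)).append (.cons hv (p.take i).reverse)
  have hq : q.support.Perm p.support := by
    have hsupp : q.support = p.support.drop (i + 1) ++ (p.support.take (i + 1)).reverse := by
      simp [q, support_append, support_take, min_eq_left (Nat.succ_le_of_lt hi)]
    rw [hsupp]
    calc List.Perm _ (p.support.take (i + 1) ++ p.support.drop (i + 1)) :=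
          List.perm_append_comm.trans ((List.reverse_perm _).append_right _)
      _ = p.support := List.take_append_drop _ _
  have hqH : q.IsHamiltonian := fun a => hq.count_eq a ▸ hp a
  exact fun _ => ⟨u, _, hqH.isHamiltonianCycle_cons hu hV⟩

end Walk

variable [DecidableEq V] [Fintype V]

lemma isHamiltonian_top (hV : 3 ≤ Fintype.card V) : (⊤ : SimpleGraph V).IsHamiltonian := by
  intro _
  obtain ⟨v, c, hc, hlen⟩ := (cycleGraph_isContained_iff hV).mp
    (isContained_top_iff.mpr ⟨(Fintype.equivFin V).symm.toEmbedding⟩)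
  exact ⟨v, c, Walk.isHamiltonianCycle_iff_isCycle_and_length_eq.mpr ⟨hc, hlen⟩⟩

lemma exists_isHamiltonian_walk_of_isHamiltonian_sup_edge (hH : ¬H.IsHamiltonian)
    (huv : (H ⊔ edge u v).IsHamiltonian) : ∃ p : H.Walk u v, p.IsHamiltonian := by
  have : Nontrivial V := by
    rw [← Fintype.one_lt_card_iff_nontrivial]
    have := Fintype.card_pos_iff.mpr ⟨u⟩
    have := mt IsHamiltonian.of_card_eq_one hH
    omega
  have mem_H : ∀ e ∈ (H ⊔ edge u v).edgeSet, e ≠ s(u, v) → e ∈ H.edgeSet := by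
    intro e he hne
    rw [edgeSet_sup] at he
    exact he.resolve_right fun h => hne (edgeSet_edge_subset h)
  have of_snd : ∀ c : (H ⊔ edge u v).Walk u u, c.IsHamiltonianCycle → v = c.snd →
      ∃ p : H.Walk u v, p.IsHamiltonian := by
    intro c hc hv
    have hnodup := hc.isCycle.edges_nodup
    rw [← c.cons_tail_eq hc.not_nil, Walk.edges_cons, List.nodup_cons] at hnodup
    have htail : ∀ e ∈ c.tail.edges, e ∈ H.edgeSet := fun e he =>
      mem_H e (c.tail.edges_subset_edgeSet he)
        (by rintro rfl; exact hnodup.1 ((congrArg (s(u, ·) ∈ c.tail.edges) hv).mp he))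
    refine ⟨((c.tail.transfer H htail).reverse).copy rfl hv.symm, fun a => ?_⟩
    simpa only [Walk.support_copy, Walk.support_reverse, Walk.support_transfer,
      List.count_reverse] using hc.isHamiltonian_tail a
  obtain ⟨c, hc⟩ := huv.exists_isHamiltonianCycle u
  have huv_mem : s(u, v) ∈ c.edges := by
    by_contra h
    exact hH fun _ => ⟨u, _, hc.transfer fun e he =>
      mem_H e (c.edges_subset_edgeSet he) (by rintro rfl; exact h he)⟩
  rcases hc.isCycle.eq_snd_or_eq_penultimate_of_mem_edges huv_mem with h | h
  · exact of_snd c hc h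
  · exact of_snd c.reverse hc.reverse (by simpa using h)

section Degree

variable [DecidableRel G.Adj]

lemma card_edgeFinset_le_choose_two_add_sum_degree (S : Finset V) :
    #G.edgeFinset ≤ (Fintype.card V - #S).choose 2 + ∑ w ∈ S, G.degree w := by
  have hinside :
      {e ∈ G.edgeFinset | ∀ x ∈ e, x ∉ S} ⊆ Sᶜ.offDiag.image Sym2.mk.uncurry := by
    intro e he
    induction e with
    | h x y =>
      simp only [mem_filter, mem_edgeFinset, mem_edgeSet, Sym2.mem_iff, forall_eq_or_imp,
        forall_eq] at he
      exact mem_image.mpr ⟨(x, y), by simpa using ⟨he.2.1, he.2.2, he.1.ne⟩, rfl⟩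
  have hmeets :
      {e ∈ G.edgeFinset | ¬∀ x ∈ e, x ∉ S} ⊆ S.biUnion (G.incidenceFinset ·) := by
    intro e he
    simp only [mem_filter, not_forall, not_not] at he
    obtain ⟨he, x, hx, hxS⟩ := he
    exact mem_biUnion.mpr
      ⟨x, hxS, (mem_incidenceFinset _ _ _).mpr ⟨mem_edgeFinset.mp he, hx⟩⟩
  calc #G.edgeFinset
      = #{e ∈ G.edgeFinset | ∀ x ∈ e, x ∉ S} + #{e ∈ G.edgeFinset | ¬∀ x ∈ e, x ∉ S} :=
        (card_filter_add_card_filter_not _).symm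
    _ ≤ #(Sᶜ.offDiag.image Sym2.mk.uncurry) + #(S.biUnion (G.incidenceFinset ·)) :=
        add_le_add (card_le_card hinside) (card_le_card hmeets)
    _ ≤ (Fintype.card V - #S).choose 2 + ∑ w ∈ S, G.degree w := by
        rw [Sym2.card_image_offDiag, card_compl]
        gcongr
        exact card_biUnion_le.trans_eq (by simp [card_incidenceFinset_eq_degree])

lemma exists_compl_adj_forall_degree_add_le (hG : G ≠ ⊤) :
    ∃ u v, Gᶜ.Adj u v ∧ G.degree u ≤ G.degree v ∧
      ∀ x y, Gᶜ.Adj x y → G.degree x + G.degree y ≤ G.degree u + G.degree v := by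
  obtain ⟨x, y, hxy⟩ := ne_top_iff_exists_not_adj.mp hG
  obtain ⟨⟨u, v⟩, huv, hmax⟩ := exists_max_image {p : V × V | Gᶜ.Adj p.1 p.2}
    (fun p => G.degree p.1 + G.degree p.2) ⟨(x, y), by simpa using hxy⟩
  simp only [mem_filter, mem_univ, true_and, Prod.forall] at huv hmax
  rcases le_total (G.degree u) (G.degree v) with h | h
  · exact ⟨u, v, huv, h, hmax⟩
  · exact ⟨v, u, huv.symm, h, fun x y hxy => add_comm (G.degree v) _ ▸ hmax x y hxy⟩

end Degree

theorem exists_degree_le_of_maximal_not_isHamiltonian [DecidableRel H.Adj]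
    (hH : Maximal (fun H : SimpleGraph V => ¬H.IsHamiltonian) H) (hV : 3 ≤ Fintype.card V) :
    ∃ u, 2 * H.degree u < Fintype.card V ∧
      ∃ S : Finset V, #S = H.degree u ∧ ∀ w ∈ S, H.degree w ≤ H.degree u := by
  obtain ⟨u, v, huv, hdeg, hmax⟩ :=
    exists_compl_adj_forall_degree_add_le (G := H) fun h =>
      hH.prop (h ▸ isHamiltonian_top hV)
  have hlt : H < H ⊔ edge u v := left_lt_sup.mpr (by rw [edge_le_iff]; simpa using huv)
  obtain ⟨p, hp⟩ := exists_isHamiltonian_walk_of_isHamiltonian_sup_edge hH.prop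
    (not_not.mp (hH.not_prop_of_gt hlt))
  obtain ⟨S, hS, hpred⟩ := hp.exists_predecessors (H.neighborFinset u) (by simp)
  rw [card_neighborFinset_eq_degree] at hS
  have hSv : ∀ w ∈ S, Hᶜ.Adj w v := by
    intro w hw
    obtain ⟨i, hi, rfl, hadj⟩ := hpred w hw
    refine ⟨fun h => ?_, fun h => hH.prop
      (hp.isHamiltonian_of_adj_getVert hV hi ((mem_neighborFinset ..).mp hadj) h.symm)⟩
    have := (hp.isPath.getVert_eq_end_iff hi.le).mp h
    omega
  refine ⟨u, ?_, S, hS, fun w hw => by have := hmax w v (hSv w hw); omega⟩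
  have hdisj : Disjoint S (insert v (H.neighborFinset v)) := by
    refine Finset.disjoint_left.mpr fun w hw h => ?_
    rcases mem_insert.mp h with rfl | h
    · exact (hSv _ hw).ne rfl
    · exact (hSv w hw).2 ((mem_neighborFinset ..).mp h).symm
  have := card_le_univ (S ∪ insert v (H.neighborFinset v))
  rw [card_union_of_disjoint hdisj, card_insert_of_notMem (by simp),
    card_neighborFinset_eq_degree] at this
  omega

end SimpleGraph

theorem KConnected.le_degree {V : Type*} [Fintype V] [DecidableEq V] {G : SimpleGraph V}
    [DecidableRel G.Adj] {k : ℕ} (hG : KConnected G k) (x : V) : k ≤ G.degree x := by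
  by_contra! hlt
  let G' := (⊤ : G.Subgraph).deleteVerts ↑(G.neighborFinset x)
  have hconn : G'.coe.Connected :=
    hG.2 _ (by rw [SimpleGraph.card_neighborFinset_eq_degree]; omega)
  obtain ⟨y, -, hy⟩ := exists_mem_notMem_of_card_lt_card (t := univ)
    (s := insert x (G.neighborFinset x)) <| by
      have := card_insert_le x (G.neighborFinset x)
      rw [SimpleGraph.card_neighborFinset_eq_degree] at this
      rw [card_univ]
      have := hG.1
      omega
  rw [mem_insert, not_or] at hy
  have hx' : x ∈ G'.verts := by simp [G']
  have hy' : y ∈ G'.verts := by simpa [G'] using hy.2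
  obtain ⟨z, hz⟩ := (hconn.preconnected ⟨x, hx'⟩ ⟨y, hy'⟩).nonempty_neighborSet_left
    (by simpa using Ne.symm hy.1)
  have hz' : G'.Adj x z := hz
  simp [G'] at hz'

lemma Nat.choose_two_add_sq_le_choose_two_add_sq {n k d : ℕ} (hkd : k ≤ d) (hdn : 2 * d < n)
    (hkn : 2 * (k ^ 2 + k) ≤ n) : (n - d).choose 2 + d ^ 2 ≤ (n - k).choose 2 + k ^ 2 := by
  -- (RHS - LHS) = (d - k) (2n - 3d - 3k - 1) / 2
  have key : 3 * d + 3 * k + 1 ≤ 2 * n ∨ d = k := by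
    rcases eq_or_lt_of_le hkd with h | h
    · exact .inr h.symm
    · left; nlinarith
  qify [Nat.cast_choose_two, (by omega : d ≤ n), (by omega : k ≤ n)]
  rcases key with h | rfl
  · qify at h hkd
    nlinarith [mul_nonneg (sub_nonneg.mpr hkd) (sub_nonneg.mpr h)]
  · rfl

open SimpleGraph in
theorem kConnected_many_edges_hamiltonian {V : Type*} [Fintype V] [DecidableEq V]
    (G : SimpleGraph V) [DecidableRel G.Adj] (k : ℕ) (n : ℕ) (hn : n = Fintype.card V)
    (hk : 1 ≤ k) (hG : KConnected G k) (hcard : 2 * (k ^ 2 + k) ≤ n)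
    (hedges : (n - k).choose 2 + k ^ 2 < G.edgeFinset.card) :
    G.IsHamiltonian := by
  classical
  by_contra hG_not
  obtain ⟨H, hGH, hH⟩ :=
    Finite.exists_le_maximal (p := fun H : SimpleGraph V => ¬H.IsHamiltonian) hG_not
  obtain ⟨u, hu, S, hS, hS_deg⟩ :=
    exists_degree_le_of_maximal_not_isHamiltonian hH (by subst hn; nlinarith)
  have hk_deg : k ≤ H.degree u := (hG.le_degree u).trans (degree_le_of_le hGH)
  have hH_edges : #H.edgeFinset ≤ (n - H.degree u).choose 2 + H.degree u ^ 2 :=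
    calc #H.edgeFinset ≤ (Fintype.card V - #S).choose 2 + ∑ w ∈ S, H.degree w :=
          card_edgeFinset_le_choose_two_add_sum_degree S
      _ ≤ (n - H.degree u).choose 2 + H.degree u ^ 2 := by
          rw [hn, hS, sq]
          gcongr
          exact (sum_le_card_nsmul S _ _ hS_deg).trans_eq (by rw [hS, smul_eq_mul])
  have := card_le_card (edgeFinset_mono hGH)
  have := Nat.choose_two_add_sq_le_choose_two_add_sq hk_deg (hn ▸ hu) hcard
  omega
end

section
/- For 2 ≤ k ≤ n/2, the complete bipartite graph K_{k,n−k} is k-cyclable and has circumference exactly 2k; hence the bound c(G) ≥ 2k for k-cyclable graphs is best possible. -/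
/-!
A closed walk in `K_{α,β}` alternates between the two sides, so a cycle visits as many vertices of
`α` as of `β`, each at most once; hence it has length at most `2 |α|`. Conversely, if
`2 ≤ |α| ≤ |β|`, all of `α` and any `|α|` vertices of `β` can be interleaved into a cycle
`a₀ b₀ a₁ b₁ … a₀` of length `2 |α|`; a set of `|α|` vertices has at most `|α|` vertices in `β`,
so it lies on such a cycle.
-/

open SimpleGraph

namespace completeBipartiteGraph

open Sum Walk

variable {α β : Type*}

theorem two_mul_countP_isLeft_support_tail_add {u v : α ⊕ β}
    (w : (completeBipartiteGraph α β).Walk u v) :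
    2 * w.support.tail.countP (·.isLeft) + u.isLeft.toNat = w.length + v.isLeft.toNat := by
  induction w with
  | nil => simp
  | @cons u x v h p ih =>
    rw [support_cons, List.tail_cons, ← p.cons_tail_support, List.countP_cons, length_cons]
    rcases h with ⟨hu, hx⟩ | ⟨hu, hx⟩ <;> cases u <;> cases x <;> simp_all <;> omega

theorem length_eq_two_mul_countP_isLeft {v : α ⊕ β} (w : (completeBipartiteGraph α β).Walk v v) :
    w.length = 2 * w.support.tail.countP (·.isLeft) := by
  have := two_mul_countP_isLeft_support_tail_add w
  omega

theorem countP_isLeft_le_card [Fintype α] {l : List (α ⊕ β)} (hl : l.Nodup) :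
    l.countP (·.isLeft) ≤ Fintype.card α := by
  have hinj : ∀ (x y : α ⊕ β) (a : α), a ∈ x.getLeft? → a ∈ y.getLeft? → x = y := by
    rintro (x | x) (y | y) a <;> simp_all
  calc l.countP (·.isLeft) = (l.filterMap getLeft?).length := by
        rw [List.length_filterMap_eq_countP]; congr 1; ext (x | x) <;> rfl
    _ ≤ Fintype.card α := (hl.filterMap hinj).length_le_card

theorem length_le_of_isCycle [Fintype α] {v : α ⊕ β} {w : (completeBipartiteGraph α β).Walk v v}
    (hw : w.IsCycle) : w.length ≤ 2 * Fintype.card α := by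
  rw [length_eq_two_mul_countP_isLeft]
  exact Nat.mul_le_mul_left 2 (countP_isLeft_le_card hw.support_nodup)

theorem inl_adj_inr (a : α) (b : β) : (completeBipartiteGraph α β).Adj (inl a) (inr b) := by
  simp [completeBipartiteGraph]

/-- The walk `b a₁ b₁ a₂ b₂ … aₘ bₘ a₀` for `l = [(a₁, b₁), …, (aₘ, bₘ)]`. -/
def zigzag (a₀ : α) :
    (l : List (α × β)) → (b : β) → (completeBipartiteGraph α β).Walk (inr b) (inl a₀)
  | [], b => cons (inl_adj_inr a₀ b).symm nil
  | p :: l, b => cons (inl_adj_inr p.1 b).symm (cons (inl_adj_inr p.1 p.2) (zigzag a₀ l p.2))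

section zigzag

variable (a₀ : α)

@[simp]
theorem length_zigzag : ∀ (l : List (α × β)) (b : β), (zigzag a₀ l b).length = 2 * l.length + 1
  | [], _ => rfl
  | p :: l, _ => by
    rw [zigzag, length_cons, length_cons, length_zigzag l p.2, List.length_cons]
    ring

theorem inl_mem_support_zigzag_iff {a : α} :
    ∀ {l : List (α × β)} {b : β}, inl a ∈ (zigzag a₀ l b).support ↔ a ∈ a₀ :: l.map Prod.fst
  | [], _ => by simp [zigzag, eq_comm]
  | p :: l, _ => by
    simp only [zigzag, support_cons, List.mem_cons, inl.injEq, reduceCtorEq, false_or,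
      inl_mem_support_zigzag_iff, List.map_cons]
    tauto

theorem inr_mem_support_zigzag_iff {c : β} :
    ∀ {l : List (α × β)} {b : β}, inr c ∈ (zigzag a₀ l b).support ↔ c ∈ b :: l.map Prod.snd
  | [], _ => by simp [zigzag]
  | p :: l, _ => by
    simp [zigzag, inr_mem_support_zigzag_iff (l := l)]

theorem isPath_zigzag :
    ∀ {l : List (α × β)} {b : β}, (a₀ :: l.map Prod.fst).Nodup → (b :: l.map Prod.snd).Nodup →
      (zigzag a₀ l b).IsPath
  | [], _, _, _ => by simp [zigzag]
  | p :: l, b, ha, hb => by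
    rw [List.map_cons, List.nodup_cons] at hb
    rw [List.map_cons, ← (List.Perm.swap _ _ _).nodup_iff, List.nodup_cons] at ha
    rw [zigzag, cons_isPath_iff, cons_isPath_iff, support_cons, List.mem_cons,
      inl_mem_support_zigzag_iff, inr_mem_support_zigzag_iff]
    exact ⟨⟨isPath_zigzag ha.2 hb.2, ha.1⟩, not_or.mpr ⟨inr_ne_inl, hb.1⟩⟩

theorem isCycle_cons_zigzag {l : List (α × β)} {b : β} (hl : l ≠ [])
    (ha : (a₀ :: l.map Prod.fst).Nodup) (hb : (b :: l.map Prod.snd).Nodup) :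
    (cons (inl_adj_inr a₀ b) (zigzag a₀ l b)).IsCycle := by
  refine isCycle_iff_isPath_tail_and_le_length.mpr ⟨?_, ?_⟩
  · rw [tail_cons]
    exact (isPath_copy _ _ _).mpr (isPath_zigzag a₀ ha hb)
  · have := List.length_pos_iff.mpr hl
    rw [length_cons, length_zigzag]
    omega

end zigzag

theorem exists_isCycle_disjSum_subset_support (s : Finset α) (t : Finset β)
    (hst : s.card = t.card) (hs : 2 ≤ s.card) :
    ∃ (v : α ⊕ β) (w : (completeBipartiteGraph α β).Walk v v),
      w.IsCycle ∧ w.length = 2 * s.card ∧ ∀ x ∈ s.disjSum t, x ∈ w.support := by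
  obtain ⟨a₀, as, has⟩ :=
    List.exists_cons_of_ne_nil (s.toList_eq_nil.not.mpr (Finset.card_pos.mp (by omega)).ne_empty)
  obtain ⟨b₀, bs, hbs⟩ :=
    List.exists_cons_of_ne_nil (t.toList_eq_nil.not.mpr (Finset.card_pos.mp (by omega)).ne_empty)
  have hlen : as.length + 1 = s.card ∧ bs.length + 1 = t.card := by
    simp [← s.length_toList, ← t.length_toList, has, hbs]
  have hfst : (as.zip bs).map Prod.fst = as := List.map_fst_zip (by omega)
  have hsnd : (as.zip bs).map Prod.snd = bs := List.map_snd_zip (by omega)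
  refine ⟨inl a₀, cons (inl_adj_inr a₀ b₀) (zigzag a₀ (as.zip bs) b₀), ?_, ?_, ?_⟩
  · refine isCycle_cons_zigzag a₀ (fun h => ?_) ?_ ?_
    · rw [h, List.map_nil] at hfst
      simp only [← hfst, List.length_nil] at hlen
      omega
    · rw [hfst, ← has]; exact s.nodup_toList
    · rw [hsnd, ← hbs]; exact t.nodup_toList
  · rw [length_cons, length_zigzag, List.length_zip]
    omega
  · rintro (a | b) hx <;> refine List.mem_cons_of_mem _ ?_
    · rw [inl_mem_support_zigzag_iff, hfst, ← has]
      simpa using hx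
    · rw [inr_mem_support_zigzag_iff, hsnd, ← hbs]
      simpa using hx

theorem kCyclable [Fintype α] [Fintype β] (hα : 2 ≤ Fintype.card α)
    (hαβ : Fintype.card α ≤ Fintype.card β) :
    KCyclable (completeBipartiteGraph α β) (Fintype.card α) := by
  intro S hS
  obtain ⟨T, hST, hT⟩ := Finset.exists_superset_card_eq (hS ▸ S.card_toRight_le) hαβ
  obtain ⟨v, w, hw, -, hmem⟩ :=
    exists_isCycle_disjSum_subset_support (Finset.univ : Finset α) T (by rw [hT, Finset.card_univ])
      (by rwa [Finset.card_univ])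
  refine ⟨v, w, hw, fun x hx => hmem x ?_⟩
  cases x with
  | inl a => simp
  | inr b => exact Finset.inr_mem_disjSum.mpr (hST (Finset.mem_toRight.mpr hx))

theorem exists_isCycle_length_eq [Fintype α] [Fintype β] (hα : 2 ≤ Fintype.card α)
    (hαβ : Fintype.card α ≤ Fintype.card β) :
    ∃ (v : α ⊕ β) (w : (completeBipartiteGraph α β).Walk v v),
      w.IsCycle ∧ w.length = 2 * Fintype.card α := by
  obtain ⟨T, -, hT⟩ := (Finset.univ : Finset β).exists_subset_card_eq (n := Fintype.card α)
    (by rwa [Finset.card_univ])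
  obtain ⟨v, w, hw, hlen, -⟩ :=
    exists_isCycle_disjSum_subset_support (Finset.univ : Finset α) T (by rw [hT, Finset.card_univ])
      (by rwa [Finset.card_univ])
  exact ⟨v, w, hw, by rw [hlen, Finset.card_univ]⟩

end completeBipartiteGraph

theorem completeBipartite_kCyclable_circumference (n k : ℕ) (hk : 2 ≤ k) (hkn : 2 * k ≤ n) :
    KCyclable (completeBipartiteGraph (Fin k) (Fin (n - k))) k ∧
    (∀ (v : Fin k ⊕ Fin (n - k)) (w : (completeBipartiteGraph (Fin k) (Fin (n - k))).Walk v v),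
      w.IsCycle → w.length ≤ 2 * k) ∧
    (∃ (v : Fin k ⊕ Fin (n - k)) (w : (completeBipartiteGraph (Fin k) (Fin (n - k))).Walk v v),
      w.IsCycle ∧ w.length = 2 * k) := by
  have hα : 2 ≤ Fintype.card (Fin k) := by rwa [Fintype.card_fin]
  have hαβ : Fintype.card (Fin k) ≤ Fintype.card (Fin (n - k)) := by
    simp only [Fintype.card_fin]
    omega
  refine ⟨?_, fun v w hw => ?_, ?_⟩
  · simpa only [Fintype.card_fin] using completeBipartiteGraph.kCyclable hα hαβ
  · simpa only [Fintype.card_fin] using completeBipartiteGraph.length_le_of_isCycle hw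
  · simpa only [Fintype.card_fin] using completeBipartiteGraph.exists_isCycle_length_eq hα hαβ
end

section
/- Suppose G equals its Bondy–Chvátal closure, G is nonhamiltonian of order n, and m ≤ α(G). Then the complement of G has at least (m/2)(n−m) edges if n is odd, and at least (m/2)(n−m) + m/2 − 1 edges if n is even. -/
/-- `S` is an independent set: its vertices are pairwise nonadjacent. -/
def IsIndepSet {V : Type*} (G : SimpleGraph V) (S : Finset V) : Prop :=
  ∀ x ∈ S, ∀ y ∈ S, x ≠ y → ¬ G.Adj x y
open SimpleGraph

/-!
Every edge of `Gᶜ` meets an independent set `S` in at most two vertices, and in two only if both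
ends lie in `S`, so `∑_{x ∈ S} d_{Gᶜ}(x) ≤ e(Gᶜ) + C(m, 2)`. Since `d_{Gᶜ} = n - 1 - d_G`, it
remains to bound `∑_{x ∈ S} d_G(x)` from above. If `x₀` has maximal degree in `S`, the closure
condition gives `2 d(y) ≤ d(y) + d(x₀) ≤ n - 1` for every other `y ∈ S`, so the sum is at most
`(n - 1) + (m - 2) ⌊(n - 1) / 2⌋`; the floor is where the extra `m / 2 - 1` for even `n` comes
from. For `m = 1` this is vacuous, but a nonhamiltonian graph on at least three vertices is not
complete, and a nonadjacent pair is an independent set of size two.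
-/

open Finset

theorem Finset.sum_le_of_pairwise_add_le {α : Type*} [DecidableEq α] (S : Finset α) (f : α → ℕ)
    (c : ℕ) (hS : 2 ≤ #S) (h : ∀ x ∈ S, ∀ y ∈ S, x ≠ y → f x + f y ≤ c) :
    ∑ x ∈ S, f x ≤ c + (#S - 2) * (c / 2) := by
  obtain ⟨x₀, hx₀, hmax⟩ := S.exists_max_image f (card_pos.1 (by omega))
  obtain ⟨x₁, hx₁⟩ : (S.erase x₀).Nonempty := by
    rw [← card_pos, card_erase_of_mem hx₀]; omega
  have hx₁S := mem_of_mem_erase hx₁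
  have hpair := h x₀ hx₀ x₁ hx₁S (ne_of_mem_erase hx₁).symm
  have hrest : ∀ y ∈ (S.erase x₀).erase x₁, f y ≤ c / 2 := by
    intro y hy
    have hyS := mem_of_mem_erase (mem_of_mem_erase hy)
    have := h y hyS x₀ hx₀ (ne_of_mem_erase (mem_of_mem_erase hy))
    have := hmax y hyS
    omega
  have hcard : #((S.erase x₀).erase x₁) = #S - 2 := by
    rw [card_erase_of_mem hx₁, card_erase_of_mem hx₀]; omega
  have hbound : ∑ x ∈ (S.erase x₀).erase x₁, f x ≤ (#S - 2) * (c / 2) := by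
    simpa only [hcard, smul_eq_mul] using sum_le_card_nsmul _ f (c / 2) hrest
  calc ∑ x ∈ S, f x = f x₀ + (f x₁ + ∑ x ∈ (S.erase x₀).erase x₁, f x) := by
        rw [add_sum_erase _ f hx₁, add_sum_erase S f hx₀]
    _ ≤ c + (#S - 2) * (c / 2) := by omega

namespace SimpleGraph

variable {V : Type*} [DecidableEq V]

theorem isIndepSet_pair {G : SimpleGraph V} {x y : V} (hxy : ¬G.Adj x y) :
    _root_.IsIndepSet G {x, y} := by
  simp only [_root_.IsIndepSet, mem_insert, mem_singleton]
  rintro a (rfl | rfl) b (rfl | rfl) hab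
  exacts [absurd rfl hab, hxy, fun h => hxy h.symm, absurd rfl hab]

variable [Fintype V]

theorem sum_degree_le_card_edgeFinset_add_choose_two (H : SimpleGraph V) [DecidableRel H.Adj]
    (S : Finset V) : ∑ x ∈ S, H.degree x ≤ #H.edgeFinset + (#S).choose 2 := by
  set P := S.offDiag.image Sym2.mk.uncurry
  have hedge : ∀ e : Sym2 V, #{x ∈ S | x ∈ e} ≤ 1 + if e ∈ P then 1 else 0 := by
    intro e
    split_ifs with he
    · calc #{x ∈ S | x ∈ e} ≤ #e.toFinset :=
            card_le_card fun x hx => by simpa using (mem_filter.1 hx).2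
        _ ≤ 2 := by rw [Sym2.card_toFinset]; split_ifs <;> simp
    · refine card_le_one.2 fun x hx y hy => by_contra fun hxy => he ?_
      rw [mem_filter] at hx hy
      rw [(Sym2.mem_and_mem_iff hxy).1 ⟨hx.2, hy.2⟩]
      exact mem_image_of_mem _ (mem_offDiag.2 ⟨hx.1, hy.1, hxy⟩)
  calc ∑ x ∈ S, H.degree x = ∑ x ∈ S, #{e ∈ H.edgeFinset | x ∈ e} := by
        simp only [← card_incidenceFinset_eq_degree, incidenceFinset_eq_filter]
    _ = ∑ e ∈ H.edgeFinset, #{x ∈ S | x ∈ e} :=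
        sum_card_bipartiteAbove_eq_sum_card_bipartiteBelow (fun x e => x ∈ e)
    _ ≤ ∑ e ∈ H.edgeFinset, (1 + if e ∈ P then 1 else 0) := sum_le_sum fun e _ => hedge e
    _ = #H.edgeFinset + #{e ∈ H.edgeFinset | e ∈ P} := by
        rw [sum_add_distrib, card_filter, card_eq_sum_ones]
    _ ≤ #H.edgeFinset + #P := by gcongr; exact fun e he => (mem_filter.1 he).2
    _ = #H.edgeFinset + (#S).choose 2 := by rw [Sym2.card_image_offDiag]

theorem top_isHamiltonian (h : 3 ≤ Fintype.card V) : (⊤ : SimpleGraph V).IsHamiltonian := by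
  intro _
  obtain ⟨k, hk⟩ : ∃ k, Fintype.card V = k + 3 := ⟨_, (Nat.sub_add_cancel h).symm⟩
  let e := (Fintype.equivFinOfCardEq hk).symm
  let f : cycleGraph (k + 3) →g (⊤ : SimpleGraph V) := ⟨e, fun hadj => e.injective.ne hadj.ne⟩
  have hcycle : (cycleGraph.cycle k).IsHamiltonianCycle :=
    Walk.isHamiltonianCycle_iff_isCycle_and_length_eq.2 ⟨cycleGraph.isCycle_cycle, by simp⟩
  exact ⟨e 0, (cycleGraph.cycle k).map f, hcycle.map e.bijective⟩

theorem exists_ne_not_adj_of_not_isHamiltonian (G : SimpleGraph V) (h : 3 ≤ Fintype.card V)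
    (hG : ¬G.IsHamiltonian) : ∃ x y, x ≠ y ∧ ¬G.Adj x y := by
  by_contra! hcomplete
  exact hG ((top_isHamiltonian h).mono fun x y hxy => hcomplete x y hxy)

variable (G : SimpleGraph V) [DecidableRel G.Adj]

theorem card_mul_le_card_compl_edgeFinset_add
    (hcl : ∀ x y : V, x ≠ y → ¬G.Adj x y → G.degree x + G.degree y ≤ Fintype.card V - 1)
    {S : Finset V} (hS : _root_.IsIndepSet G S) (h2 : 2 ≤ #S) :
    #S * (Fintype.card V - 1) ≤ #Gᶜ.edgeFinset + (#S).choose 2 +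
      (Fintype.card V - 1 + (#S - 2) * ((Fintype.card V - 1) / 2)) := by
  have hG := Finset.sum_le_of_pairwise_add_le S (fun x => G.degree x) _ h2
    fun x hx y hy hxy => hcl x y hxy (hS x hx y hy hxy)
  have hGc := Gᶜ.sum_degree_le_card_edgeFinset_add_choose_two S
  have hsum : ∑ x ∈ S, (Gᶜ.degree x + G.degree x) = #S * (Fintype.card V - 1) := by
    rw [sum_congr rfl fun x _ => ?_, sum_const, smul_eq_mul]
    have := G.degree_lt_card_verts x
    rw [degree_compl]
    omega
  rw [sum_add_distrib] at hsum
  omega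

theorem le_card_compl_edgeFinset_of_two_le_card
    (hcl : ∀ x y : V, x ≠ y → ¬G.Adj x y → G.degree x + G.degree y ≤ Fintype.card V - 1)
    {S : Finset V} (hS : _root_.IsIndepSet G S) (h2 : 2 ≤ #S) :
    (Odd (Fintype.card V) →
      (#S : ℚ) / 2 * ((Fintype.card V : ℚ) - #S) ≤ (#Gᶜ.edgeFinset : ℚ)) ∧
    (Even (Fintype.card V) →
      (#S : ℚ) / 2 * ((Fintype.card V : ℚ) - #S) + (#S : ℚ) / 2 - 1 ≤ (#Gᶜ.edgeFinset : ℚ)) := by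
  have key := card_mul_le_card_compl_edgeFinset_add G hcl hS h2
  have hn : 2 ≤ Fintype.card V := h2.trans (card_le_univ S)
  set d := (Fintype.card V - 1) / 2 with hd
  have keyℚ : (#S : ℚ) * (Fintype.card V - 1) ≤
      #Gᶜ.edgeFinset + #S * (#S - 1) / 2 + (Fintype.card V - 1 + (#S - 2) * d) := by
    have := (Nat.cast_le (α := ℚ)).2 key
    push_cast [Nat.cast_sub (by omega : 1 ≤ Fintype.card V), Nat.cast_sub h2,
      Nat.cast_choose_two] at this
    exact this
  constructor
  · rintro ⟨k, hk⟩
    have hdk : (d : ℚ) = k := by norm_cast; omega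
    rw [hdk] at keyℚ
    rw [hk] at keyℚ ⊢
    push_cast at keyℚ ⊢
    linarith
  · rintro ⟨k, hk⟩
    have hdk : (d : ℚ) = k - 1 := by
      rw [eq_sub_iff_add_eq]; exact_mod_cast (by omega : d + 1 = k)
    rw [hdk] at keyℚ
    rw [hk] at keyℚ ⊢
    push_cast at keyℚ ⊢
    linarith

end SimpleGraph

theorem closure_closed_complement_edges {V : Type*} [Fintype V] [DecidableEq V]
    (G : SimpleGraph V) [DecidableRel G.Adj] (n m : ℕ) (hn : n = Fintype.card V)
    (hcl : ∀ x y : V, x ≠ y → ¬ G.Adj x y → G.degree x + G.degree y ≤ n - 1)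
    (hham : ¬ G.IsHamiltonian)
    (hm : ∃ S : Finset V, S.card = m ∧ _root_.IsIndepSet G S) :
    (Odd n → (m : ℚ) / 2 * ((n : ℚ) - m) ≤ (Gᶜ.edgeFinset.card : ℚ)) ∧
    (Even n → (m : ℚ) / 2 * ((n : ℚ) - m) + (m : ℚ) / 2 - 1 ≤ (Gᶜ.edgeFinset.card : ℚ)) := by
  obtain ⟨S, rfl, hS⟩ := hm
  subst hn
  have hE : (0 : ℚ) ≤ #Gᶜ.edgeFinset := Nat.cast_nonneg _
  obtain hS0 | hS1 | h2 : #S = 0 ∨ #S = 1 ∨ 2 ≤ #S := by omega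
  · rw [hS0]
    constructor <;> intro <;> push_cast <;> linarith
  · rw [hS1]
    obtain hn | hn : Fintype.card V ≤ 2 ∨ 3 ≤ Fintype.card V := by omega
    · have hn1 : 1 ≤ Fintype.card V := hS1 ▸ card_le_univ S
      obtain h | h : Fintype.card V = 1 ∨ Fintype.card V = 2 := by omega
      all_goals rw [h]; norm_num [hE]
    obtain ⟨x, y, hxy, hnadj⟩ := exists_ne_not_adj_of_not_isHamiltonian G hn hham
    have hcard := card_pair hxy
    obtain ⟨hodd, heven⟩ :=
      le_card_compl_edgeFinset_of_two_le_card G hcl (isIndepSet_pair hnadj) hcard.ge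
    rw [hcard] at hodd heven
    have h3 : (3 : ℚ) ≤ Fintype.card V := by exact_mod_cast hn
    constructor <;> intro hpar
    · have := hodd hpar; push_cast at this ⊢; linarith
    · have := heven hpar; push_cast at this ⊢; linarith
  · exact le_card_compl_edgeFinset_of_two_le_card G hcl hS h2
end

section
/- If G is a k-cyclable graph on n vertices with n ≥ 2k² (k ≥ 2), then G has more than (1/2)(2k−1)(n−1) edges or a cycle of length at least 2k; consequently c(G) ≥ 2k whenever k ≤ √(n/2). -/
open SimpleGraph

/-!
If every cycle of `G` has length less than `2k`, take a longest path inside a vertex set `s`,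
starting at `x`. All neighbours of `x` in `s` lie on the path, hence on its prefix up to the last
of them, and that prefix closes into a cycle; so `x` has at most `2k - 2` neighbours in `s`.
Deleting `x` with its neighbours and recursing yields an independent set of size at least
`n / (2k - 1) > k - 1`. By `k`-cyclability `k` of its vertices lie on a common cycle, and a cycle
through `k` pairwise non-adjacent vertices has length at least `2k`. Hence the cycle alternative
always holds.
-/

open Finset

namespace SimpleGraph

variable {V : Type*} {G : SimpleGraph V}

theorem exists_isPath_forall_adj_mem_support [Fintype V] {s : Finset V} (hs : s.Nonempty) :
    ∃ (x y : V) (p : G.Walk x y), p.IsPath ∧ (∀ a ∈ p.support, a ∈ s) ∧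
      ∀ u ∈ s, G.Adj x u → u ∈ p.support := by
  let lengths : Set ℕ :=
    {m | ∃ (x y : V) (p : G.Walk x y), p.IsPath ∧ (∀ a ∈ p.support, a ∈ s) ∧ p.length = m}
  have hne : lengths.Nonempty := by
    obtain ⟨v, hv⟩ := hs
    exact ⟨0, v, v, .nil, .nil, by simpa using hv, rfl⟩
  have hbdd : BddAbove lengths :=
    ⟨Fintype.card V, fun _ ⟨_, _, p, hp, _, hm⟩ => hm ▸ hp.length_lt.le⟩
  obtain ⟨x, y, p, hp, hps, hlen⟩ := Nat.sSup_mem hne hbdd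
  refine ⟨x, y, p, hp, hps, fun u hus hxu => by_contra fun hup => ?_⟩
  have hlonger : p.length + 1 ∈ lengths := by
    refine ⟨u, y, .cons hxu.symm p, hp.cons hup, fun a ha => ?_, rfl⟩
    rw [Walk.support_cons, List.mem_cons] at ha
    rcases ha with rfl | ha
    exacts [hus, hps a ha]
  have := le_csSup hbdd hlonger
  omega

variable [DecidableEq V]

namespace Walk

lemma IsCycle.two_le_card_filter_mem_edges {u x : V} {w : G.Walk u u}
    (hw : w.IsCycle) (hx : x ∈ w.support) : 2 ≤ #{e ∈ w.edges.toFinset | x ∈ e} := by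
  obtain ⟨a, b, hab, hnbr⟩ := Set.ncard_eq_two.mp (hw.ncard_neighborSet_toSubgraph_eq_two hx)
  have hmem : ∀ c ∈ w.toSubgraph.neighborSet x, s(x, c) ∈ {e ∈ w.edges.toFinset | x ∈ e} :=
    fun c hc => mem_filter.mpr
      ⟨List.mem_toFinset.mpr (adj_toSubgraph_iff_mem_edges.mp hc), Sym2.mem_mk_left x c⟩
  calc 2 = #{s(x, a), s(x, b)} :=
        (card_pair fun h => hab (Sym2.congr_right.mp h)).symm
    _ ≤ _ := card_le_card <| insert_subset (hmem a (by simp [hnbr]))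
        (singleton_subset_iff.mpr (hmem b (by simp [hnbr])))

theorem IsCycle.two_mul_card_le_length {u : V} {w : G.Walk u u}
    (hw : w.IsCycle) {S : Finset V} (hS : G.IsIndepSet S) (hSw : ∀ x ∈ S, x ∈ w.support) :
    2 * #S ≤ w.length := by
  have hedge : ∀ e ∈ w.edges.toFinset, #{x ∈ S | x ∈ e} ≤ 1 := by
    intro e he
    refine card_le_one.mpr fun a ha b hb => by_contra fun hab => ?_
    simp only [mem_filter] at ha hb
    have he' := w.edges_subset_edgeSet (List.mem_toFinset.mp he)
    rw [(Sym2.mem_and_mem_iff hab).mp ⟨ha.2, hb.2⟩, SimpleGraph.mem_edgeSet] at he'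
    exact hS ha.1 hb.1 hab he'
  calc 2 * #S = #S * 2 := mul_comm _ _
    _ ≤ #w.edges.toFinset * 1 := card_mul_le_card_mul (fun x e => x ∈ e)
        (fun x hx => hw.two_le_card_filter_mem_edges (hSw x hx)) hedge
    _ = w.length := by
      rw [mul_one, List.toFinset_card_of_nodup hw.edges_nodup, length_edges]

lemma exists_mem_forall_mem_support_takeUntil {u v : V} (p : G.Walk u v) {N : Finset V}
    (hN : N.Nonempty) (hNp : ∀ a ∈ N, a ∈ p.support) :
    ∃ z ∈ N, ∃ hz : z ∈ p.support, ∀ a ∈ N, a ∈ (p.takeUntil z hz).support := by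
  let pos : V → ℕ := fun a => if ha : a ∈ p.support then (p.takeUntil a ha).length else 0
  obtain ⟨z, hzN, hmax⟩ := N.exists_max_image pos hN
  refine ⟨z, hzN, hNp z hzN, fun a haN => ?_⟩
  have hle := hmax a haN
  simp only [pos, dif_pos (hNp a haN), dif_pos (hNp z hzN)] at hle
  rw [← p.getVert_length_takeUntil (hNp a haN), ← p.getVert_takeUntil (hNp z hzN) hle]
  exact getVert_mem_support _ _

end Walk

theorem exists_card_adj_le_of_forall_isCycle_length_le [Fintype V] [DecidableRel G.Adj]
    {d : ℕ} (hd : 1 ≤ d) (hcyc : ∀ (v : V) (w : G.Walk v v), w.IsCycle → w.length ≤ d + 1)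
    {s : Finset V} (hs : s.Nonempty) : ∃ x ∈ s, #{y ∈ s | G.Adj x y} ≤ d := by
  obtain ⟨x, y, p, hp, hps, hmax⟩ := exists_isPath_forall_adj_mem_support (G := G) hs
  refine ⟨x, hps x p.start_mem_support, ?_⟩
  rcases ({y ∈ s | G.Adj x y} : Finset V).eq_empty_or_nonempty with hN | hN
  · simp [hN]
  obtain ⟨z, hzN, hz, hall⟩ := p.exists_mem_forall_mem_support_takeUntil hN
    fun a ha => hmax a (mem_filter.mp ha).1 (mem_filter.mp ha).2
  set q := p.takeUntil z hz
  have hq : q.IsPath := hp.takeUntil hz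
  have hxz : G.Adj x z := (mem_filter.mp hzN).2
  have hqlen : q.length ≤ d := by
    by_contra! hlong
    have hcycle : (Walk.cons hxz.symm q).IsCycle := by
      refine (Walk.cons_isCycle_iff q hxz.symm).mpr ⟨hq, fun he => ?_⟩
      have := hq.length_eq_one_of_mem_edges (Sym2.eq_swap ▸ he)
      omega
    have := hcyc z _ hcycle
    simp only [Walk.length_cons] at this
    omega
  calc #{y ∈ s | G.Adj x y} ≤ #(q.support.toFinset.erase x) :=
        card_le_card fun a ha => mem_erase.mpr
          ⟨(G.ne_of_adj (mem_filter.mp ha).2).symm, List.mem_toFinset.mpr (hall a ha)⟩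
    _ = q.length := by
        rw [card_erase_of_mem (List.mem_toFinset.mpr q.start_mem_support),
          List.toFinset_card_of_nodup hq.support_nodup, Walk.length_support, Nat.add_sub_cancel]
    _ ≤ d := hqlen

theorem exists_isIndepSet_card_le_mul [DecidableRel G.Adj] {d : ℕ}
    (hdeg : ∀ s : Finset V, s.Nonempty → ∃ x ∈ s, #{y ∈ s | G.Adj x y} ≤ d) (s : Finset V) :
    ∃ I ⊆ s, G.IsIndepSet I ∧ #s ≤ #I * (d + 1) := by
  induction s using Finset.strongInduction with | H s ih
  rcases s.eq_empty_or_nonempty with rfl | hs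
  · exact ⟨∅, empty_subset _, by simp, by simp⟩
  obtain ⟨x, hxs, hx⟩ := hdeg s hs
  set closedNbhd := insert x {y ∈ s | G.Adj x y}
  have hrest : s \ closedNbhd ⊂ s :=
    sdiff_ssubset (insert_subset hxs (filter_subset _ _)) (insert_nonempty _ _)
  obtain ⟨I, hIs, hI, hcard⟩ := ih _ hrest
  have hnadj : ∀ b ∈ I, ¬ G.Adj x b := fun b hb hxb => (mem_sdiff.mp (hIs hb)).2
    (mem_insert_of_mem (mem_filter.mpr ⟨(mem_sdiff.mp (hIs hb)).1, hxb⟩))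
  have hxI : x ∉ I := fun hxI => (mem_sdiff.mp (hIs hxI)).2 (mem_insert_self _ _)
  refine ⟨insert x I, insert_subset hxs (hIs.trans sdiff_subset), ?_, ?_⟩
  · rw [coe_insert]
    exact hI.insert fun b hb _ => ⟨hnadj b hb, fun hbx => hnadj b hb hbx.symm⟩
  · calc #s ≤ #(s \ closedNbhd) + #closedNbhd := card_le_card_sdiff_add_card
      _ ≤ #I * (d + 1) + (d + 1) := add_le_add hcard (card_insert_le _ _ |>.trans (by omega))
      _ = #(insert x I) * (d + 1) := by rw [card_insert_of_notMem hxI]; ring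

end SimpleGraph

theorem KCyclable.exists_isCycle_two_mul_le_length {V : Type*} [DecidableEq V]
    {G : SimpleGraph V} {k : ℕ} (hG : KCyclable G k) {I : Finset V} (hI : G.IsIndepSet I)
    (hk : k ≤ #I) : ∃ (v : V) (w : G.Walk v v), w.IsCycle ∧ 2 * k ≤ w.length := by
  obtain ⟨S, hSI, hSk⟩ := exists_subset_card_eq hk
  obtain ⟨v, w, hw, hSw⟩ := hG S hSk
  exact ⟨v, w, hw, hSk ▸ hw.two_mul_card_le_length (hI.mono hSI) hSw⟩

theorem kCyclable_edges_or_cycle {V : Type*} [Fintype V] [DecidableEq V]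
    (G : SimpleGraph V) [DecidableRel G.Adj] (k n : ℕ) (hn : n = Fintype.card V)
    (hk : 2 ≤ k) (hcard : 2 * k ^ 2 ≤ n) (hG : KCyclable G k) :
    ((2 * (k : ℚ) - 1) * ((n : ℚ) - 1) / 2 < (G.edgeFinset.card : ℚ) ∨
      ∃ (v : V) (w : G.Walk v v), w.IsCycle ∧ 2 * k ≤ w.length) ∧
    ((k : ℝ) ≤ Real.sqrt ((n : ℝ) / 2) →
      ∃ (v : V) (w : G.Walk v v), w.IsCycle ∧ 2 * k ≤ w.length) := by
  have hcycle : ∃ (v : V) (w : G.Walk v v), w.IsCycle ∧ 2 * k ≤ w.length := by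
    by_contra! hshort
    obtain ⟨j, rfl⟩ : ∃ j, k = j + 2 := ⟨k - 2, by omega⟩
    obtain ⟨I, -, hI, hIcard⟩ := exists_isIndepSet_card_le_mul
      (fun _ => exists_card_adj_le_of_forall_isCycle_length_le (d := 2 * j + 2) (by omega)
        fun v w hw => by have := hshort v w hw; omega) univ
    have hkI : j + 2 ≤ #I := by
      by_contra! hsmall
      rw [card_univ, ← hn] at hIcard
      -- n ≤ #I * (2k - 1) ≤ (k - 1) * (2k - 1) < 2k²
      nlinarith
    obtain ⟨v, w, hw, hlen⟩ := hG.exists_isCycle_two_mul_le_length hI hkI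
    exact (hshort v w hw).not_ge hlen
  exact ⟨Or.inr hcycle, fun _ => hcycle⟩
end
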